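/- Let d ≥ 1 and let J : ℝ^d → (0,∞) be a Borel function. For ε > 0 set J_ε(x) = ε^d J(εx) and assume x ↦ min(1,|x|) J_ε(x) is integrable for every ε > 0. Suppose ℓ(s) = ∫_{|x|>s} J(x) dx is finite for s > 0 and slowly varying at zero, i.e. for every λ > 0, ℓ(λs)/ℓ(s) → 1 as s → 0⁺. Let E ⊂ ℝ^d be a Borel set of finite Lebesgue measure whose covariance function g_E is Lipschitz continuous (this holds whenever E also has finite classical perimeter). Then lim_{ε→0⁺} ℓ(ε)^{−1} Per_{J_ε}(E) = |E|, where Per_{J_ε}(E) = ∫_E ∫_{E^c} J_ε(x − y) dy dx. -/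

import Mathlib

/-!
Writing `Per_J(E) = ∫ J(z) (|E| - g_E(z)) dz` and substituting `z = w / ε` gives
`Per_{J_ε}(E) = ∫ J(w) (|E| - g_E(w / ε)) dw`.

Lower bound: `g_E` vanishes at infinity, so for `R` large the region `|w| > R ε` alone
contributes at least `(|E| - η) ℓ(R ε)`, and `ℓ(R ε) / ℓ(ε) → 1`.

Upper bound: `|w| > ε` contributes at most `|E| ℓ(ε)`; on `|w| ≤ ε` the Lipschitz bound
`|E| - g_E(w / ε) ≤ L |w| / ε` leaves the first moment `∫_{|w| ≤ ε} |w| J(w) dw`. On the dyadic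
annulus `2⁻ᵏ⁻¹ ε < |w| ≤ 2⁻ᵏ ε` slow variation bounds the mass of `J` by `δ (1 + δ)ᵏ ℓ(ε)`, so
summing a geometric series the moment is at most `4 δ ε ℓ(ε)`, i.e. it is `o(ε ℓ(ε))`.
-/

open MeasureTheory Filter Topology ENNReal NNReal

/-- The `J`-perimeter `Per_J(E) = ∫_E ∫_{Eᶜ} J(x − y) dy dx`. -/
noncomputable def JPer {d : ℕ} (J : EuclideanSpace ℝ (Fin d) → ℝ)
    (E : Set (EuclideanSpace ℝ (Fin d))) : ℝ≥0∞ :=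
  ∫⁻ x in E, ∫⁻ y in Eᶜ, ENNReal.ofReal (J (x - y))

/-- The covariance function `g_E(y) = |E ∩ (E + y)|` of a set `E`. -/
noncomputable def covFn {d : ℕ} (E : Set (EuclideanSpace ℝ (Fin d)))
    (y : EuclideanSpace ℝ (Fin d)) : ℝ≥0∞ :=
  volume (E ∩ {x | x - y ∈ E})

open Set Metric

noncomputable def tailIntegral {X : Type*} [Norm X] [MeasurableSpace X] (μ : Measure X)
    (f : X → ℝ≥0∞) (s : ℝ) : ℝ≥0∞ :=
  ∫⁻ x in {x | s < ‖x‖}, f x ∂μ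

lemma Ioc_subset_iUnion_Ioc_inv_two_pow_mul (b : ℝ) :
    Ioc 0 b ⊆ ⋃ k : ℕ, Ioc (2⁻¹ ^ (k + 1) * b) (2⁻¹ ^ k * b) := by
  rintro t ⟨ht, htb⟩
  obtain ⟨k, hk, hk'⟩ := exists_nat_pow_near ((one_le_div ht).2 htb) one_lt_two
  refine mem_iUnion.2 ⟨k, ?_, ?_⟩
  · rw [inv_pow, inv_mul_eq_div, div_lt_iff₀ (by positivity), mul_comm]
    rwa [div_lt_iff₀ ht] at hk'
  · rw [inv_pow, inv_mul_eq_div, le_div_iff₀ (by positivity), mul_comm]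
    rwa [le_div_iff₀ ht] at hk

lemma apply_inv_two_pow_mul_le {ℓ : ℝ → ℝ≥0∞} {b : ℝ} {c : ℝ≥0∞} (hb : 0 < b)
    (hhalf : ∀ s ∈ Ioc 0 b, ℓ (2⁻¹ * s) ≤ c * ℓ s) (k : ℕ) :
    ℓ (2⁻¹ ^ k * b) ≤ c ^ k * ℓ b := by
  induction k with
  | zero => simp
  | succ k ih =>
    have hk : 2⁻¹ ^ k * b ∈ Ioc 0 b :=
      ⟨by positivity, mul_le_of_le_one_left hb.le (pow_le_one₀ (by norm_num) (by norm_num))⟩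
    calc ℓ (2⁻¹ ^ (k + 1) * b) = ℓ (2⁻¹ * (2⁻¹ ^ k * b)) := by ring_nf
      _ ≤ c * (c ^ k * ℓ b) := (hhalf _ hk).trans (by gcongr)
      _ = c ^ (k + 1) * ℓ b := by ring

lemma tsum_one_add_mul_inv_two_pow_le {δ : ℝ≥0∞} (hδ : δ ≤ 2⁻¹) :
    ∑' k : ℕ, ((1 + δ) * 2⁻¹) ^ k ≤ 4 := by
  have hsum : (1 + δ) * 2⁻¹ + 2⁻¹ * 2⁻¹ ≤ 1 := calc
    (1 + δ) * 2⁻¹ + 2⁻¹ * 2⁻¹ ≤ (1 + 2⁻¹) * 2⁻¹ + 2⁻¹ * 2⁻¹ := by gcongr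
    _ = 2⁻¹ * (2⁻¹ + 2⁻¹) + 2⁻¹ := by ring
    _ = 1 := by rw [ENNReal.inv_two_add_inv_two, mul_one, ENNReal.inv_two_add_inv_two]
  calc ∑' k : ℕ, ((1 + δ) * 2⁻¹) ^ k = (1 - (1 + δ) * 2⁻¹)⁻¹ := ENNReal.tsum_geometric _
    _ ≤ (2⁻¹ * 2⁻¹)⁻¹ := ENNReal.inv_le_inv.2 (ENNReal.le_sub_of_add_le_left
      (ne_top_of_le_ne_top one_ne_top (le_self_add.trans hsum)) hsum)
    _ = 4 := by rw [ENNReal.mul_inv (by simp) (by simp), inv_inv]; norm_num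

section TailIntegral

variable {X : Type*} [SeminormedAddCommGroup X] [MeasurableSpace X] [OpensMeasurableSpace X]
  {μ : Measure X} {f : X → ℝ≥0∞}

lemma setLIntegral_norm_preimage_Ioc {a b : ℝ} (hab : a ≤ b) (hb : tailIntegral μ f b ≠ ∞) :
    ∫⁻ x in norm ⁻¹' Ioc a b, f x ∂μ = tailIntegral μ f a - tailIntegral μ f b := by
  have hsplit : tailIntegral μ f a =
      (∫⁻ x in norm ⁻¹' Ioc a b, f x ∂μ) + tailIntegral μ f b := by
    have hunion : {x : X | a < ‖x‖} = norm ⁻¹' Ioc a b ∪ norm ⁻¹' Ioi b := by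
      rw [← preimage_union, Ioc_union_Ioi_eq_Ioi hab]
      rfl
    rw [tailIntegral, tailIntegral, hunion]
    exact lintegral_union (continuous_norm.measurable measurableSet_Ioi)
      (Ioc_disjoint_Ioi_same.preimage _)
  rw [hsplit, ENNReal.add_sub_cancel_right hb]

lemma lintegral_closedBall_norm_mul_le {b : ℝ} {δ : ℝ≥0∞} (hb : 0 < b) (hδ : δ ≤ 2⁻¹)
    (hfin : ∀ s ∈ Ioc 0 b, tailIntegral μ f s ≠ ∞)
    (hhalf : ∀ s ∈ Ioc 0 b, tailIntegral μ f (2⁻¹ * s) ≤ (1 + δ) * tailIntegral μ f s) :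
    ∫⁻ x in closedBall 0 b, ENNReal.ofReal ‖x‖ * f x ∂μ ≤
      4 * δ * ENNReal.ofReal b * tailIntegral μ f b := by
  set ℓ := tailIntegral μ f
  have hr : ∀ k : ℕ, 2⁻¹ ^ k * b ∈ Ioc 0 b := fun k =>
    ⟨by positivity, mul_le_of_le_one_left hb.le (pow_le_one₀ (by norm_num) (by norm_num))⟩
  have hannulus : ∀ k : ℕ,
      ∫⁻ x in norm ⁻¹' Ioc (2⁻¹ ^ (k + 1) * b) (2⁻¹ ^ k * b), ENNReal.ofReal ‖x‖ * f x ∂μ ≤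
        ENNReal.ofReal b * δ * ℓ b * ((1 + δ) * 2⁻¹) ^ k := by
    intro k
    have hstep : ℓ (2⁻¹ ^ (k + 1) * b) ≤ δ * ℓ (2⁻¹ ^ k * b) + ℓ (2⁻¹ ^ k * b) := by
      rw [pow_succ', mul_assoc]
      exact (hhalf _ (hr k)).trans_eq (by ring)
    calc ∫⁻ x in norm ⁻¹' Ioc (2⁻¹ ^ (k + 1) * b) (2⁻¹ ^ k * b), ENNReal.ofReal ‖x‖ * f x ∂μ
        ≤ ∫⁻ x in norm ⁻¹' Ioc (2⁻¹ ^ (k + 1) * b) (2⁻¹ ^ k * b),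
            ENNReal.ofReal (2⁻¹ ^ k * b) * f x ∂μ :=
          setLIntegral_mono' (continuous_norm.measurable measurableSet_Ioc)
            fun x hx => by gcongr; exact hx.2
      _ = ENNReal.ofReal (2⁻¹ ^ k * b) * (ℓ (2⁻¹ ^ (k + 1) * b) - ℓ (2⁻¹ ^ k * b)) := by
          rw [lintegral_const_mul' _ _ ofReal_ne_top,
            setLIntegral_norm_preimage_Ioc (mul_le_mul_of_nonneg_right
              (pow_le_pow_of_le_one (by norm_num) (by norm_num) k.le_succ) hb.le)
              (hfin _ (hr k))]
      _ ≤ ENNReal.ofReal (2⁻¹ ^ k * b) * (δ * ((1 + δ) ^ k * ℓ b)) := by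
          gcongr
          exact (tsub_le_iff_right.2 hstep).trans
            (by gcongr; exact apply_inv_two_pow_mul_le hb hhalf k)
      _ = ENNReal.ofReal b * δ * ℓ b * ((1 + δ) * 2⁻¹) ^ k := by
          rw [ENNReal.ofReal_mul (by positivity), ENNReal.ofReal_pow (by norm_num),
            ENNReal.ofReal_inv_of_pos two_pos, ENNReal.ofReal_ofNat, mul_pow]
          ring
  have hcover : closedBall (0 : X) b ⊆
      norm ⁻¹' Iic 0 ∪ ⋃ k : ℕ, norm ⁻¹' Ioc (2⁻¹ ^ (k + 1) * b) (2⁻¹ ^ k * b) := by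
    intro x hx
    rw [mem_closedBall_zero_iff] at hx
    rcases le_or_gt ‖x‖ 0 with h | h
    · exact Or.inl h
    · simpa using Or.inr (Ioc_subset_iUnion_Ioc_inv_two_pow_mul b ⟨h, hx⟩)
  calc ∫⁻ x in closedBall 0 b, ENNReal.ofReal ‖x‖ * f x ∂μ
      ≤ (∫⁻ x in norm ⁻¹' Iic 0, ENNReal.ofReal ‖x‖ * f x ∂μ) +
          ∑' k : ℕ, ∫⁻ x in norm ⁻¹' Ioc (2⁻¹ ^ (k + 1) * b) (2⁻¹ ^ k * b),
            ENNReal.ofReal ‖x‖ * f x ∂μ :=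
        (lintegral_mono_set hcover).trans <|
          (lintegral_union_le _ _ _).trans (add_le_add le_rfl (lintegral_iUnion_le _ _))
    _ ≤ 0 + ∑' k : ℕ, ENNReal.ofReal b * δ * ℓ b * ((1 + δ) * 2⁻¹) ^ k := by
        gcongr with k
        · exact (setLIntegral_eq_zero (continuous_norm.measurable measurableSet_Iic)
            fun x hx => by simp [ENNReal.ofReal_eq_zero.2 (show ‖x‖ ≤ 0 from hx)]).le
        · exact hannulus k
    _ ≤ ENNReal.ofReal b * δ * ℓ b * 4 := by
        rw [zero_add, ENNReal.tsum_mul_left]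
        gcongr
        exact tsum_one_add_mul_inv_two_pow_le hδ
    _ = 4 * δ * ENNReal.ofReal b * ℓ b := by ring

lemma eventually_lintegral_closedBall_norm_mul_le (hfin : ∀ s > 0, tailIntegral μ f s < ∞)
    (hslow : Tendsto (fun s => tailIntegral μ f (2⁻¹ * s) / tailIntegral μ f s) (𝓝[>] 0) (𝓝 1))
    {θ : ℝ≥0∞} (hθ : θ ≠ 0) :
    ∀ᶠ b in 𝓝[>] 0, ∫⁻ x in closedBall 0 b, ENNReal.ofReal ‖x‖ * f x ∂μ ≤
      θ * ENNReal.ofReal b * tailIntegral μ f b := by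
  set δ := min 2⁻¹ (θ / 4)
  have hδ : δ ≠ 0 := (lt_min (by simp) (ENNReal.div_pos hθ (by simp))).ne'
  have hδ_top : δ ≠ ∞ := ne_top_of_le_ne_top (by simp) (min_le_left _ _)
  have h4δ : 4 * δ ≤ θ := calc
    4 * δ ≤ 4 * (θ / 4) := by gcongr; exact min_le_right _ _
    _ ≤ θ := ENNReal.mul_div_le
  obtain ⟨u, hu, hhalf⟩ := mem_nhdsGT_iff_exists_Ioc_subset.1
    (hslow.eventually (gt_mem_nhds (ENNReal.lt_add_right one_ne_top hδ)))
  filter_upwards [Ioc_mem_nhdsGT hu] with b hb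
  refine (lintegral_closedBall_norm_mul_le hb.1 (min_le_left _ _) (fun s hs => (hfin s hs.1).ne)
    fun s hs => ?_).trans (by gcongr)
  exact (ENNReal.div_le_iff_le_mul (Or.inr (ENNReal.add_ne_top.2 ⟨one_ne_top, hδ_top⟩))
    (Or.inr (by simp))).1 (hhalf ⟨hs.1, hs.2.trans hb.2⟩).le

end TailIntegral

lemma lintegral_comp_smul_addHaar {F : Type*} [NormedAddCommGroup F] [NormedSpace ℝ F]
    [MeasurableSpace F] [BorelSpace F] [FiniteDimensional ℝ F] (μ : Measure F)
    [μ.IsAddHaarMeasure] {f : F → ℝ≥0∞} (hf : Measurable f) {r : ℝ} (hr : r ≠ 0) :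
    ∫⁻ x, f (r • x) ∂μ = ENNReal.ofReal |(r ^ Module.finrank ℝ F)⁻¹| * ∫⁻ x, f x ∂μ := by
  rw [← lintegral_map hf (measurable_const_smul r), Measure.map_addHaar_smul μ hr,
    lintegral_smul_measure, smul_eq_mul]

section Covariance

variable {d : ℕ} {E : Set (EuclideanSpace ℝ (Fin d))}

lemma measurable_covFn (hE : MeasurableSet E) : Measurable (covFn E) :=
  measurable_measure_prodMk_left
    ((measurable_snd hE).inter ((measurable_snd.sub measurable_fst) hE))

lemma covFn_zero (E : Set (EuclideanSpace ℝ (Fin d))) : covFn E 0 = volume E := by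
  simp [covFn]

lemma covFn_le_volume (z : EuclideanSpace ℝ (Fin d)) : covFn E z ≤ volume E :=
  measure_mono inter_subset_left

lemma volume_sub_covFn_le (hEvol : volume E ≠ ∞) {L : ℝ≥0}
    (hL : LipschitzWith L fun y => (covFn E y).toReal) (z : EuclideanSpace ℝ (Fin d)) :
    volume E - covFn E z ≤ ENNReal.ofReal (L * ‖z‖) := calc
  volume E - covFn E z = ENNReal.ofReal ((volume E - covFn E z).toReal) :=
    (ofReal_toReal (ne_top_of_le_ne_top hEvol tsub_le_self)).symm
  _ = ENNReal.ofReal ((covFn E 0).toReal - (covFn E z).toReal) := by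
    rw [covFn_zero, ENNReal.toReal_sub_of_le (covFn_le_volume z) hEvol]
  _ ≤ ENNReal.ofReal (L * ‖z‖) := by
    gcongr
    simpa [Real.dist_eq] using (le_abs_self _).trans (hL.dist_le_mul 0 z)

lemma covFn_le_of_two_mul_lt_norm {r : ℝ} {z : EuclideanSpace ℝ (Fin d)} (hz : 2 * r < ‖z‖) :
    covFn E z ≤ volume (E \ closedBall 0 r) + volume (E \ closedBall 0 r) := by
  have hsub : E ∩ {x | x - z ∈ E} ⊆
      E \ closedBall 0 r ∪ (· + -z) ⁻¹' (E \ closedBall 0 r) := by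
    rintro x ⟨hx, hxz⟩
    by_cases hxr : ‖x‖ ≤ r
    · refine Or.inr ⟨by simpa [← sub_eq_add_neg] using hxz, fun hxzr => ?_⟩
      have hxzr' : ‖x - z‖ ≤ r := by simpa [sub_eq_add_neg] using hxzr
      have htri := norm_sub_le x (x - z)
      rw [_root_.sub_sub_cancel] at htri
      linarith
    · exact Or.inl ⟨hx, by simpa using hxr⟩
  calc covFn E z ≤ _ := (measure_mono hsub).trans (measure_union_le _ _)
    _ = _ := by rw [measure_preimage_add_right]

lemma exists_covFn_le (hE : MeasurableSet E) (hEvol : volume E ≠ ∞) {η : ℝ≥0∞} (hη : η ≠ 0) :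
    ∃ R > 0, ∀ z, R < ‖z‖ → covFn E z ≤ η := by
  have : IsFiniteMeasure (volume.restrict E) := isFiniteMeasure_restrict.2 hEvol
  have htight := tendsto_measure_compl_closedBall_of_isTightMeasureSet
    (isTightMeasureSet_singleton (μ := volume.restrict E)) (0 : EuclideanSpace ℝ (Fin d))
  simp only [mem_singleton_iff, iSup_iSup_eq_left] at htight
  obtain ⟨r, hr⟩ := (htight.eventually (gt_mem_nhds (ENNReal.half_pos hη))).exists_forall_of_atTop
  refine ⟨2 * max r 1, by positivity, fun z hz => ?_⟩
  have hsmall : volume (E \ closedBall 0 (max r 1)) ≤ η / 2 := by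
    rw [sdiff_eq, inter_comm, ← Measure.restrict_apply' hE]
    exact (hr _ (le_max_left _ _)).le
  calc covFn E z ≤ η / 2 + η / 2 :=
      (covFn_le_of_two_mul_lt_norm hz).trans (add_le_add hsmall hsmall)
    _ = η := ENNReal.add_halves η

end Covariance

section Perimeter

variable {d : ℕ} {E : Set (EuclideanSpace ℝ (Fin d))}

lemma JPer_eq_lintegral_covFn {F : EuclideanSpace ℝ (Fin d) → ℝ} (hF : Measurable F)
    (hE : MeasurableSet E) (hEvol : volume E ≠ ∞) :
    JPer F E = ∫⁻ z, ENNReal.ofReal (F z) * (volume E - covFn E z) := by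
  have hinner : ∀ x, ∫⁻ y in Eᶜ, ENNReal.ofReal (F (x - y)) =
      ∫⁻ z, ENNReal.ofReal (F z) * Eᶜ.indicator 1 (x - z) := by
    intro x
    rw [← lintegral_indicator hE.compl, ← lintegral_sub_left_eq_self _ x]
    congr with z
    by_cases hz : x - z ∈ E <;> simp [hz]
  have hvol : ∀ z, ∫⁻ x in E, Eᶜ.indicator 1 (x - z) = volume E - covFn E z := by
    intro z
    have hS : MeasurableSet {x | x - z ∈ E} := measurable_sub_const z hE
    have hind : (fun x => Eᶜ.indicator (1 : EuclideanSpace ℝ (Fin d) → ℝ≥0∞) (x - z)) =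
        {x | x - z ∈ E}ᶜ.indicator 1 := by
      ext x
      by_cases hx : x - z ∈ E <;> simp [hx]
    rw [hind, lintegral_indicator_one hS.compl, Measure.restrict_apply hS.compl, inter_comm,
      ← sdiff_eq]
    exact ENNReal.eq_sub_of_add_eq (ne_top_of_le_ne_top hEvol (covFn_le_volume z))
      ((add_comm _ _).trans (measure_inter_add_sdiff E hS))
  simp_rw [JPer, hinner]
  rw [lintegral_lintegral_swap ((hF.comp measurable_snd).ennreal_ofReal.mul
    ((measurable_const.indicator hE.compl).comp (measurable_fst.sub measurable_snd))).aemeasurable]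
  simp_rw [lintegral_const_mul' _ _ ofReal_ne_top, hvol]

lemma JPer_rescale {J : EuclideanSpace ℝ (Fin d) → ℝ} (hJ : Measurable J)
    (hE : MeasurableSet E) (hEvol : volume E ≠ ∞) {ε : ℝ} (hε : 0 < ε) :
    JPer (fun x => ε ^ d * J (ε • x)) E =
      ∫⁻ w, ENNReal.ofReal (J w) * (volume E - covFn E (ε⁻¹ • w)) := by
  have hrescale : ∀ z, ENNReal.ofReal (ε ^ d * J (ε • z)) * (volume E - covFn E z) =
      ENNReal.ofReal (ε ^ d) *
        (ENNReal.ofReal (J (ε • z)) * (volume E - covFn E (ε⁻¹ • ε • z))) := by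
    intro z
    rw [inv_smul_smul₀ hε.ne', ENNReal.ofReal_mul (by positivity), mul_assoc]
  rw [JPer_eq_lintegral_covFn (by fun_prop) hE hEvol]
  simp_rw [hrescale]
  rw [lintegral_const_mul' _ _ ofReal_ne_top, lintegral_comp_smul_addHaar volume
    (f := fun w => ENNReal.ofReal (J w) * (volume E - covFn E (ε⁻¹ • w)))
    (hJ.ennreal_ofReal.mul (measurable_const.sub
      ((measurable_covFn hE).comp (measurable_const_smul ε⁻¹)))) hε.ne',
    finrank_euclideanSpace_fin, ← mul_assoc,
    ← ENNReal.ofReal_mul (by positivity), abs_of_pos (by positivity),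
    mul_inv_cancel₀ (by positivity), ENNReal.ofReal_one, one_mul]

lemma le_JPer_rescale {J : EuclideanSpace ℝ (Fin d) → ℝ} (hJ : Measurable J)
    (hE : MeasurableSet E) (hEvol : volume E ≠ ∞) {R ε : ℝ} {c : ℝ≥0∞} (hε : 0 < ε)
    (hc : ∀ z, R < ‖z‖ → c ≤ volume E - covFn E z) :
    c * tailIntegral volume (fun x => ENNReal.ofReal (J x)) (R * ε) ≤
      JPer (fun x => ε ^ d * J (ε • x)) E := by
  rw [JPer_rescale hJ hE hEvol hε, tailIntegral, ← lintegral_const_mul c hJ.ennreal_ofReal]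
  refine (setLIntegral_mono' (measurableSet_lt measurable_const continuous_norm.measurable)
    fun w hw => ?_).trans (setLIntegral_le_lintegral _ _)
  have hw' : R < ‖ε⁻¹ • w‖ := by
    rw [norm_smul, Real.norm_of_nonneg (inv_nonneg.2 hε.le), lt_inv_mul_iff₀ hε, mul_comm]
    exact hw
  rw [mul_comm]
  gcongr
  exact hc _ hw'

lemma JPer_rescale_le {J : EuclideanSpace ℝ (Fin d) → ℝ} (hJ : Measurable J)
    (hE : MeasurableSet E) (hEvol : volume E ≠ ∞) {L : ℝ≥0}
    (hL : LipschitzWith L fun y => (covFn E y).toReal) {ε : ℝ} {θ : ℝ≥0∞} (hε : 0 < ε)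
    (hmoment : ∫⁻ w in closedBall 0 ε, ENNReal.ofReal ‖w‖ * ENNReal.ofReal (J w) ≤
      θ * ENNReal.ofReal ε * tailIntegral volume (fun x => ENNReal.ofReal (J x)) ε) :
    JPer (fun x => ε ^ d * J (ε • x)) E ≤
      (volume E + θ * ENNReal.ofReal L) *
        tailIntegral volume (fun x => ENNReal.ofReal (J x)) ε := by
  set ℓ := tailIntegral volume (fun x => ENNReal.ofReal (J x))
  have hcompl : (closedBall (0 : EuclideanSpace ℝ (Fin d)) ε)ᶜ = {w | ε < ‖w‖} := by
    ext w; simp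
  have hnear :
      ∫⁻ w in closedBall 0 ε, ENNReal.ofReal (J w) * (volume E - covFn E (ε⁻¹ • w)) ≤
        θ * ENNReal.ofReal L * ℓ ε := calc
    _ ≤ ∫⁻ w in closedBall 0 ε,
          ENNReal.ofReal (L / ε) * (ENNReal.ofReal ‖w‖ * ENNReal.ofReal (J w)) := by
        refine lintegral_mono fun w => ?_
        calc ENNReal.ofReal (J w) * (volume E - covFn E (ε⁻¹ • w))
            ≤ ENNReal.ofReal (J w) * ENNReal.ofReal (L * ‖ε⁻¹ • w‖) := by
              gcongr; exact volume_sub_covFn_le hEvol hL _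
          _ = _ := by
              rw [norm_smul, Real.norm_of_nonneg (inv_nonneg.2 hε.le), ← mul_assoc,
                ← div_eq_mul_inv, ENNReal.ofReal_mul (by positivity)]
              ring
    _ ≤ ENNReal.ofReal (L / ε) * (θ * ENNReal.ofReal ε * ℓ ε) := by
        rw [lintegral_const_mul' _ _ ofReal_ne_top]
        gcongr
    _ = θ * (ENNReal.ofReal (L / ε) * ENNReal.ofReal ε) * ℓ ε := by ring
    _ = θ * ENNReal.ofReal L * ℓ ε := by
        rw [← ENNReal.ofReal_mul (by positivity), div_mul_cancel₀ _ hε.ne']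
  have hfar :
      ∫⁻ w in {w | ε < ‖w‖}, ENNReal.ofReal (J w) * (volume E - covFn E (ε⁻¹ • w)) ≤
        volume E * ℓ ε := calc
    _ ≤ ∫⁻ w in {w | ε < ‖w‖}, ENNReal.ofReal (J w) * volume E :=
        lintegral_mono fun w => by gcongr; exact tsub_le_self
    _ = volume E * ℓ ε := by rw [lintegral_mul_const' _ _ hEvol, mul_comm]; rfl
  rw [JPer_rescale hJ hE hEvol hε,
    ← lintegral_add_compl _ isClosed_closedBall.measurableSet, hcompl, add_mul, add_comm]
  exact add_le_add hfar hnear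

end Perimeter

theorem statement15_general {d : ℕ}
    (J : EuclideanSpace ℝ (Fin d) → ℝ)
    (hJmeas : Measurable J)
    (ℓ : ℝ → ℝ≥0∞)
    (hℓ : ∀ s, ℓ s = ∫⁻ x in {x : EuclideanSpace ℝ (Fin d) | s < ‖x‖},
      ENNReal.ofReal (J x))
    (hℓfin : ∀ s > (0 : ℝ), ℓ s < ⊤)
    (hslow : ∀ c > (0 : ℝ),
      Tendsto (fun s => ℓ (c * s) / ℓ s) (𝓝[>] (0 : ℝ)) (𝓝 1))
    (E : Set (EuclideanSpace ℝ (Fin d)))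
    (hE : MeasurableSet E) (hEvol : volume E < ⊤)
    (hLip : ∃ L : ℝ≥0, LipschitzWith L fun y => (covFn E y).toReal) :
    Tendsto (fun ε : ℝ => (ℓ ε)⁻¹ * JPer (fun x => ε ^ d * J (ε • x)) E)
      (𝓝[>] (0 : ℝ)) (𝓝 (volume E)) := by
  obtain ⟨L, hL⟩ := hLip
  obtain rfl : ℓ = tailIntegral volume fun x => ENNReal.ofReal (J x) := funext hℓ
  refine tendsto_order.2 ⟨fun b hb => ?_, fun b hb => ?_⟩
  · obtain ⟨c, hbc, hcV⟩ := exists_between hb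
    obtain ⟨R, hR, hRc⟩ := exists_covFn_le hE hEvol.ne (tsub_pos_of_lt hcV).ne'
    have hc : ∀ z, R < ‖z‖ → c ≤ volume E - covFn E z := fun z hz => by
      simpa [ENNReal.sub_sub_cancel hEvol.ne hcV.le] using tsub_le_tsub_left (hRc z hz) (volume E)
    have hlim := ENNReal.Tendsto.const_mul (hslow R hR) (Or.inr (hcV.trans hEvol).ne)
    rw [mul_one] at hlim
    filter_upwards [hlim.eventually (lt_mem_nhds hbc), self_mem_nhdsWithin] with ε hbε hε
    refine hbε.trans_le ?_
    rw [div_eq_mul_inv, ← mul_assoc, mul_comm]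
    gcongr
    exact le_JPer_rescale hJmeas hE hEvol.ne hε hc
  · obtain ⟨θ, hθ, hθb⟩ := ENNReal.exists_pos_mul_lt ofReal_ne_top (tsub_pos_of_lt hb).ne'
    filter_upwards [eventually_lintegral_closedBall_norm_mul_le hℓfin (hslow 2⁻¹ (by norm_num))
      hθ.ne', self_mem_nhdsWithin] with ε hmoment hε
    calc _ ≤ _ := mul_le_mul_right (JPer_rescale_le hJmeas hE hEvol.ne hL hε hmoment) _
      _ ≤ volume E + θ * ENNReal.ofReal L := by
        rw [mul_left_comm]
        exact mul_le_of_le_one_right' (ENNReal.inv_mul_le_one _)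
      _ < b := lt_tsub_iff_left.1 hθb

/-- For a positive kernel `J` with slowly varying tail
`ℓ(s) = ∫_{|x|>s} J(x) dx` at zero, the rescaled kernels `J_ε(x) = ε^d J(εx)`
satisfy `ℓ(ε)⁻¹ Per_{J_ε}(E) → |E|` for every Borel set `E` of finite Lebesgue
measure with Lipschitz covariance function. -/
theorem statement15 {d : ℕ} (hd : 1 ≤ d)
    (J : EuclideanSpace ℝ (Fin d) → ℝ)
    (hJmeas : Measurable J) (hJpos : ∀ x, 0 < J x)
    (hint : ∀ ε > (0 : ℝ),
      Integrable fun x : EuclideanSpace ℝ (Fin d) =>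
        min 1 ‖x‖ * (ε ^ d * J (ε • x)))
    (ℓ : ℝ → ℝ≥0∞)
    (hℓ : ∀ s, ℓ s = ∫⁻ x in {x : EuclideanSpace ℝ (Fin d) | s < ‖x‖},
      ENNReal.ofReal (J x))
    (hℓfin : ∀ s > (0 : ℝ), ℓ s < ⊤)
    (hslow : ∀ c > (0 : ℝ),
      Tendsto (fun s => ℓ (c * s) / ℓ s) (𝓝[>] (0 : ℝ)) (𝓝 1))
    (E : Set (EuclideanSpace ℝ (Fin d)))
    (hE : MeasurableSet E) (hEvol : volume E < ⊤)
    (hLip : ∃ L : ℝ≥0, LipschitzWith L fun y => (covFn E y).toReal) :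
    Tendsto (fun ε : ℝ => (ℓ ε)⁻¹ * JPer (fun x => ε ^ d * J (ε • x)) E)
      (𝓝[>] (0 : ℝ)) (𝓝 (volume E)) :=
  statement15_general J hJmeas ℓ hℓ hℓfin hslow E hE hEvol hLip
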